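/- Conditionally on ∇H_N(σ) = 0, the Hamiltonian H_N(σ) of the pure p-spin model with potential V is deterministic and equals p⁻¹·⟨σ, V'(σ)⟩ − Σᵢ V(σᵢ), where V'(σ) = (V'(σ₁),…,V'(σ_N)). -/
import Mathlib


open Finset

/-- The centered pure `p`-spin Gaussian field. -/
noncomputable def Xfield' {Ω : Type*} (N p : ℕ) (g : (Fin p → Fin N) → Ω → ℝ)
    (σ : Fin N → ℝ) (ω : Ω) : ℝ :=
  (N : ℝ) ^ (-((p : ℝ) - 1) / 2) * ∑ f : Fin p → Fin N, g f ω * ∏ k, σ (f k)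

/-- Its `j`-th partial derivative in `σ`. -/
noncomputable def Xgrad' {Ω : Type*} (N p : ℕ) (g : (Fin p → Fin N) → Ω → ℝ)
    (σ : Fin N → ℝ) (j : Fin N) (ω : Ω) : ℝ :=
  (N : ℝ) ^ (-((p : ℝ) - 1) / 2) * ∑ f : Fin p → Fin N, g f ω *
    ∑ k : Fin p, (if f k = j then ∏ l ∈ Finset.univ.erase k, σ (f l) else 0)

/-- On the event `∇H_N(σ) = 0`, the Hamiltonian
`H_N(σ) = X_N(σ) − Σᵢ V(σᵢ)` is deterministic and equals
`p⁻¹·⟨σ, V'(σ)⟩ − Σᵢ V(σᵢ)`. -/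
theorem stmt6 {Ω : Type*} (N p : ℕ) (hN : 0 < N) (hp : 2 ≤ p)
    (g : (Fin p → Fin N) → Ω → ℝ) (V : ℝ → ℝ) (hV : ContDiff ℝ 2 V)
    (σ : Fin N → ℝ) (ω : Ω)
    (hcrit : ∀ j : Fin N, Xgrad' N p g σ j ω - deriv V (σ j) = 0) :
    Xfield' N p g σ ω - ∑ i, V (σ i) =
      (p : ℝ)⁻¹ * (∑ i, σ i * deriv V (σ i)) - ∑ i, V (σ i) := by
  have key : ∑ j, σ j * Xgrad' N p g σ j ω = (p : ℝ) * Xfield' N p g σ ω := by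
    unfold Xgrad' Xfield'
    set c : ℝ := (N : ℝ) ^ (-((p : ℝ) - 1) / 2) with hc
    set S : (Fin p → Fin N) → Fin N → ℝ := fun f j =>
      ∑ k : Fin p, (if f k = j then ∏ l ∈ Finset.univ.erase k, σ (f l) else 0) with hS
    have hf : ∀ f : Fin p → Fin N,
        ∑ j, σ j * S f j = (p : ℝ) * ∏ l, σ (f l) := by
      intro f
      have h1 : ∀ j, σ j * S f j
          = ∑ k : Fin p,
            (if f k = j then σ j * ∏ l ∈ Finset.univ.erase k, σ (f l) else 0) := by
        intro j
        rw [hS]; dsimp only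
        rw [Finset.mul_sum]
        exact Finset.sum_congr rfl fun k _ => by split <;> simp
      simp_rw [h1]
      rw [Finset.sum_comm]
      have h2 : ∀ k : Fin p, (∑ j,
          (if f k = j then σ j * ∏ l ∈ Finset.univ.erase k, σ (f l) else 0))
          = ∏ l, σ (f l) := by
        intro k
        rw [Finset.sum_ite_eq]
        simp only [Finset.mem_univ, if_true]
        exact Finset.mul_prod_erase Finset.univ (fun l => σ (f l)) (Finset.mem_univ k)
      simp_rw [h2]
      rw [Finset.sum_const, Finset.card_univ, Fintype.card_fin, nsmul_eq_mul]
    calc ∑ j, σ j * (c * ∑ f : Fin p → Fin N, g f ω * S f j)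
        = ∑ f : Fin p → Fin N, c * g f ω * ∑ j, σ j * S f j := by
          simp_rw [Finset.mul_sum]
          rw [Finset.sum_comm]
          exact Finset.sum_congr rfl fun f _ => Finset.sum_congr rfl fun j _ => by ring
      _ = ∑ f : Fin p → Fin N, c * g f ω * ((p : ℝ) * ∏ l, σ (f l)) := by
          exact Finset.sum_congr rfl fun f _ => by rw [hf f]
      _ = (p : ℝ) * (c * ∑ f : Fin p → Fin N, g f ω * ∏ k, σ (f k)) := by
          rw [Finset.mul_sum, Finset.mul_sum]
          exact Finset.sum_congr rfl fun f _ => by ring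
  have hpne : (p : ℝ) ≠ 0 := by positivity
  have hX : Xfield' N p g σ ω = (p : ℝ)⁻¹ * ∑ i, σ i * deriv V (σ i) := by
    have h2 : ∀ j, Xgrad' N p g σ j ω = deriv V (σ j) := fun j => by
      have := hcrit j; linarith
    have h3 : ∑ j, σ j * deriv V (σ j) = (p : ℝ) * Xfield' N p g σ ω := by
      rw [← key]; exact Finset.sum_congr rfl fun j _ => by rw [h2 j]
    rw [h3, ← mul_assoc, inv_mul_cancel₀ hpne, one_mul]
  rw [hX]
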